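/- For every tournament T on a finite vertex set V, the inversion index i(T) equals the minimum, over all acyclic tournaments T' on V, of the least m such that T' = Inv(T, (X_i)_{i<m}) for some sequence (X_i)_{i<m} of subsets of V; equivalently, i(T) is the minimum over acyclic T' on V of the Boolean dimension of the Boolean sum T +̇ T'. -/

import Mathlib

/-- A tournament on a vertex set `V`: a loopless directed graph such that for all
distinct `x, y` exactly one of `(x,y)`, `(y,x)` is an arc. -/
structure Tournament (V : Type*) where
  rel : V → V → Prop
  irrefl : ∀ x, ¬ rel x x
  total : ∀ x y, x ≠ y → rel x y ∨ rel y x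
  asymm : ∀ x y, rel x y → ¬ rel y x

namespace Tournament

variable {V : Type*} {W : Type*}

/-- The tournament obtained from `T` by reversing all arcs both of whose
endpoints lie in `X`. -/
def inv (T : Tournament V) (X : Set V) : Tournament V where
  rel x y := (x ∈ X ∧ y ∈ X ∧ T.rel y x) ∨ ((x ∉ X ∨ y ∉ X) ∧ T.rel x y)
  irrefl x := by have := T.irrefl x; tauto
  total x y hxy := by
    have := T.total x y hxy
    by_cases hx : x ∈ X <;> by_cases hy : y ∈ X <;> tauto
  asymm x y := by have h1 := T.asymm x y; have h2 := T.asymm y x; tauto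

/-- Successive inversions along a finite sequence of subsets (`X_0` first). -/
def invSeq (T : Tournament V) (Xs : List (Set V)) : Tournament V :=
  Xs.foldl Tournament.inv T

/-- A tournament is acyclic (transitive) when its arc relation is transitive,
i.e. a strict linear order. -/
def IsAcyclic (T : Tournament V) : Prop :=
  ∀ x y z, T.rel x y → T.rel y z → T.rel x z

/-- The inversion index: the least number of subsets to be inverted to reach an
acyclic tournament. -/
noncomputable def index (T : Tournament V) : ℕ :=
  sInf {m | ∃ Xs : List (Set V), Xs.length = m ∧ (T.invSeq Xs).IsAcyclic}

/-- Induced subtournament on a set of vertices. -/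
def restrict (T : Tournament V) (A : Set V) : Tournament A where
  rel x y := T.rel x y
  irrefl x := T.irrefl x
  total x y hxy := T.total x y (fun h => hxy (Subtype.ext h))
  asymm x y := T.asymm x y

/-- `T − x`: the subtournament induced on `V ∖ {x}`. -/
def erase (T : Tournament V) (x : V) : Tournament {y : V // y ≠ x} :=
  T.restrict {y | y ≠ x}

/-- `S` embeds into `T`: `S` is isomorphic to the subtournament of `T` induced on
some subset of the vertices of `T`. -/
def Embeds (S : Tournament V) (T : Tournament W) : Prop :=
  ∃ f : V → W, Function.Injective f ∧ ∀ x y, S.rel x y ↔ T.rel (f x) (f y)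

/-- Isomorphism of tournaments. -/
def Iso (S : Tournament V) (T : Tournament W) : Prop :=
  ∃ e : V ≃ W, ∀ x y, S.rel x y ↔ T.rel (e x) (e y)

/-- The dual tournament, obtained by reversing all arcs. -/
def dual (T : Tournament V) : Tournament V where
  rel x y := T.rel y x
  irrefl x := T.irrefl x
  total x y hxy := (T.total x y hxy).symm
  asymm x y h := T.asymm y x h

/-- `X` is an interval of `T`. -/
def IsInterval (T : Tournament V) (X : Set V) : Prop :=
  ∀ y ∉ X, (∀ x ∈ X, T.rel x y) ∨ (∀ x ∈ X, T.rel y x)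

/-- A tournament is indecomposable when all its intervals are trivial. -/
def Indecomposable (T : Tournament V) : Prop :=
  ∀ X : Set V, T.IsInterval X → X = ∅ ∨ X = Set.univ ∨ ∃ x, X = {x}

end Tournament

/-- The transitive tournament `n̲` on `{0, …, n−1}`, with arcs `(i,j)` for `i < j`. -/
def linear (n : ℕ) : Tournament (Fin n) where
  rel x y := x < y
  irrefl x := lt_irrefl x
  total _ _ h := h.lt_or_gt
  asymm _ _ h := lt_asymm h

/-- `2ℕ_{<k} = {0, 2, …, 2(k−1)}` as a subset of `Fin N`. -/
def evensLT {N : ℕ} (k : ℕ) : Set (Fin N) := {i | (i : ℕ) % 2 = 0 ∧ (i : ℕ) < 2 * k}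

/-- `2ℕ_{<k}+1 = {1, 3, …, 2k−1}` as a subset of `Fin N`. -/
def oddsLT {N : ℕ} (k : ℕ) : Set (Fin N) := {i | (i : ℕ) % 2 = 1 ∧ (i : ℕ) < 2 * k}

/-- The Boolean dimension of a (loopless, undirected) graph `G`: the least `m` such
that `G` can be represented by the non-orthogonality relation on `(𝔽₂)^m` with the
ordinary scalar product. -/
noncomputable def booleanDim {V : Type*} (G : SimpleGraph V) : ℕ :=
  sInf {m | ∃ f : V → (Fin m → ZMod 2), ∀ x y : V, x ≠ y →
    (G.Adj x y ↔ ∑ i, f x i * f y i = 1)}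

/-- The Boolean sum `T +̇ T'` of two tournaments on the same vertex set: the graph
whose edges are the pairs of distinct vertices on which the two arcs have opposite
orientations. -/
def boolSum {V : Type*} (T T' : Tournament V) : SimpleGraph V where
  Adj x y := x ≠ y ∧ ¬ (T.rel x y ↔ T'.rel x y)
  symm := ⟨by
    rintro x y ⟨hxy, h⟩
    refine ⟨hxy.symm, ?_⟩
    have h1 : T.rel y x ↔ ¬ T.rel x y :=
      ⟨fun hr => T.asymm y x hr, fun hn => (T.total x y hxy).resolve_left hn⟩
    have h2 : T'.rel y x ↔ ¬ T'.rel x y :=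
      ⟨fun hr => T'.asymm y x hr, fun hn => (T'.total x y hxy).resolve_left hn⟩
    tauto⟩
  loopless := ⟨fun x => by simp⟩


/-
Inverting `X` flips exactly the arcs inside `X`, so after inverting `X_0, …, X_{m-1}` the arc
between `x ≠ y` is flipped iff `x, y` lie together in an odd number of the `X_i`. Hence
`Inv(T, (X_i)_{i<m}) = T'` iff `x ↦ (𝟙[x ∈ X_i])_{i<m}` is a Boolean representation of `T +̇ T'`,
and every Boolean representation arises this way from the level sets of its coordinates. On a
finite vertex set every graph has a Boolean representation (one coordinate per edge), so every
`T'` is reachable from `T`, and both minima agree with `i(T)`.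
-/

theorem Nat.sInf_setOf_exists_mem {ι : Type*} (p : ι → Prop) (S : ι → Set ℕ)
    (hS : ∀ i, p i → (S i).Nonempty) :
    sInf {m | ∃ i, p i ∧ m ∈ S i} = sInf {k | ∃ i, p i ∧ k = sInf (S i)} := by
  by_cases h : ∃ i, p i
  · obtain ⟨i₀, hi₀⟩ := h
    obtain ⟨m₀, hm₀⟩ := hS i₀ hi₀
    refine le_antisymm (le_csInf ⟨_, i₀, hi₀, rfl⟩ ?_) (le_csInf ⟨m₀, i₀, hi₀, hm₀⟩ ?_)
    · rintro _ ⟨i, hi, rfl⟩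
      apply Nat.sInf_le
      exact ⟨i, hi, Nat.sInf_mem (hS i hi)⟩
    · rintro m ⟨i, hi, hm⟩
      calc sInf {k | ∃ i, p i ∧ k = sInf (S i)} ≤ sInf (S i) := Nat.sInf_le ⟨i, hi, rfl⟩
        _ ≤ m := Nat.sInf_le hm
  · have hp : ∀ i, ¬p i := fun i hi => h ⟨i, hi⟩
    simp [hp]

theorem ZMod.two_add_eq_one_iff (a b : ZMod 2) : a + b = 1 ↔ ¬(a = 1 ↔ b = 1) := by
  revert a b; decide

theorem Set.indicator_setOf_eq_one {V : Type*} (a : V → ZMod 2) (x : V) :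
    {y | a y = 1}.indicator 1 x = a x := by
  by_cases h : a x = 1
  · simp [h]
  · have h0 : a x = 0 := by revert h; generalize a x = c; revert c; decide
    simp [h0]

theorem Set.indicator_one_mul_indicator_one_eq_one_iff {V M : Type*} [MulZeroOneClass M]
    [Nontrivial M] (X : Set V) (x y : V) :
    X.indicator (1 : V → M) x * X.indicator 1 y = 1 ↔ x ∈ X ∧ y ∈ X := by
  by_cases hx : x ∈ X <;> by_cases hy : y ∈ X <;> simp [hx, hy]

namespace SimpleGraph

variable {V : Type*}

/-- `booleanDim G` unfolds to the least `m` admitting such an `f` with `ι = Fin m`. -/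
def IsBooleanRepr (G : SimpleGraph V) {ι : Type*} [Fintype ι] (f : V → ι → ZMod 2) : Prop :=
  ∀ x y, x ≠ y → (G.Adj x y ↔ ∑ i, f x i * f y i = 1)

theorem IsBooleanRepr.eq {G H : SimpleGraph V} {ι : Type*} [Fintype ι] {f : V → ι → ZMod 2}
    (hG : G.IsBooleanRepr f) (hH : H.IsBooleanRepr f) : G = H := by
  ext x y
  by_cases hxy : x = y
  · subst hxy; simp
  · rw [hG x y hxy, hH x y hxy]

theorem IsBooleanRepr.reindex {G : SimpleGraph V} {ι κ : Type*} [Fintype ι] [Fintype κ]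
    {f : V → ι → ZMod 2} (hf : G.IsBooleanRepr f) (e : ι ≃ κ) :
    G.IsBooleanRepr fun x k => f x (e.symm k) := by
  intro x y hxy
  rw [hf x y hxy, e.symm.sum_comp fun i => f x i * f y i]

theorem isBooleanRepr_incidenceSet [Fintype V] [DecidableEq V] (G : SimpleGraph V) :
    G.IsBooleanRepr fun x e => (G.incidenceSet x).indicator 1 e := by
  intro x y hxy
  have hmul (e : Sym2 V) : (G.incidenceSet x).indicator (1 : Sym2 V → ZMod 2) e *
      (G.incidenceSet y).indicator 1 e = (G.incidenceSet x ∩ G.incidenceSet y).indicator 1 e := by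
    rw [Set.inter_indicator_one]; rfl
  simp only [hmul]
  by_cases hadj : G.Adj x y
  · simp [G.incidenceSet_inter_incidenceSet_of_adj hadj, hadj, Set.indicator_apply]
  · simp [G.incidenceSet_inter_incidenceSet_of_not_adj hadj hxy, hadj]

theorem exists_isBooleanRepr_fin [Finite V] (G : SimpleGraph V) :
    ∃ m, ∃ f : V → Fin m → ZMod 2, G.IsBooleanRepr f := by
  classical
  have := Fintype.ofFinite V
  exact ⟨_, _, G.isBooleanRepr_incidenceSet.reindex (Fintype.equivFin (Sym2 V))⟩

end SimpleGraph

namespace Tournament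

variable {V : Type*}

theorem ext {A B : Tournament V} (h : ∀ x y, A.rel x y ↔ B.rel x y) : A = B := by
  cases A; cases B
  congr
  funext x y
  exact propext (h x y)

theorem rel_swap_iff (T : Tournament V) {x y : V} (hxy : x ≠ y) : T.rel y x ↔ ¬T.rel x y :=
  ⟨T.asymm y x, (T.total x y hxy).resolve_left⟩

theorem invSeq_cons (T : Tournament V) (X : Set V) (Xs : List (Set V)) :
    T.invSeq (X :: Xs) = (T.inv X).invSeq Xs := rfl

theorem index_eq_sInf_setOf_exists_isAcyclic (T : Tournament V) :
    T.index = sInf {m | ∃ T' : Tournament V, T'.IsAcyclic ∧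
      ∃ Xs : List (Set V), Xs.length = m ∧ ∀ x y, (T.invSeq Xs).rel x y ↔ T'.rel x y} := by
  refine congrArg sInf (Set.ext fun m => ⟨?_, ?_⟩)
  · rintro ⟨Xs, hlen, hacyc⟩
    exact ⟨_, hacyc, Xs, hlen, fun _ _ => Iff.rfl⟩
  · rintro ⟨T', hacyc, Xs, hlen, hXs⟩
    exact ⟨Xs, hlen, Tournament.ext hXs ▸ hacyc⟩

end Tournament

section BoolSum

variable {V : Type*}

open Tournament

theorem boolSum_adj_iff_xor (T A B : Tournament V) {x y : V} (hxy : x ≠ y) :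
    (boolSum T A).Adj x y ↔ ¬((boolSum T B).Adj x y ↔ (boolSum B A).Adj x y) := by
  simp only [boolSum, ne_eq, hxy, not_false_eq_true, true_and]
  tauto

theorem boolSum_inv_adj_iff (T : Tournament V) (X : Set V) {x y : V} (hxy : x ≠ y) :
    (boolSum T (T.inv X)).Adj x y ↔ x ∈ X ∧ y ∈ X := by
  show x ≠ y ∧ ¬(T.rel x y ↔
    (x ∈ X ∧ y ∈ X ∧ T.rel y x) ∨ ((x ∉ X ∨ y ∉ X) ∧ T.rel x y)) ↔ _
  rw [T.rel_swap_iff hxy]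
  tauto

theorem boolSum_injective (T : Tournament V) : Function.Injective (boolSum T) := by
  intro A B hAB
  refine Tournament.ext fun x y => ?_
  by_cases hxy : x = y
  · subst hxy
    exact iff_of_false (A.irrefl x) (B.irrefl x)
  · have h : (boolSum T A).Adj x y ↔ (boolSum T B).Adj x y := by rw [hAB]
    simp only [boolSum, ne_eq, hxy, not_false_eq_true, true_and] at h
    tauto

theorem isBooleanRepr_boolSum_invSeq_ofFn (T : Tournament V) {m : ℕ} (F : Fin m → Set V) :
    (boolSum T (T.invSeq (List.ofFn F))).IsBooleanRepr fun x i => (F i).indicator 1 x := by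
  induction m generalizing T with
  | zero =>
    intro x y _
    simp [boolSum, invSeq]
  | succ m ih =>
    intro x y hxy
    rw [List.ofFn_succ, invSeq_cons, Fin.sum_univ_succ, boolSum_adj_iff_xor _ _ (T.inv (F 0)) hxy,
      boolSum_inv_adj_iff T _ hxy, ih _ _ x y hxy, ZMod.two_add_eq_one_iff,
      Set.indicator_one_mul_indicator_one_eq_one_iff]

theorem setOf_invSeq_eq_setOf_isBooleanRepr (T T' : Tournament V) :
    {m | ∃ Xs : List (Set V), Xs.length = m ∧ ∀ x y, (T.invSeq Xs).rel x y ↔ T'.rel x y} =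
      {m | ∃ f : V → Fin m → ZMod 2, (boolSum T T').IsBooleanRepr f} := by
  ext m
  constructor
  · rintro ⟨Xs, rfl, hXs⟩
    obtain rfl := Tournament.ext hXs
    refine ⟨fun x i => Xs[(i : ℕ)].indicator 1 x, ?_⟩
    have hrepr := isBooleanRepr_boolSum_invSeq_ofFn T fun i => Xs[(i : ℕ)]
    rwa [List.ofFn_getElem] at hrepr
  · rintro ⟨f, hf⟩
    refine ⟨List.ofFn fun i => {x | f x i = 1}, List.length_ofFn, fun x y => ?_⟩
    have hrepr := isBooleanRepr_boolSum_invSeq_ofFn T fun i => {x | f x i = 1}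
    simp only [Set.indicator_setOf_eq_one] at hrepr
    rw [boolSum_injective T (hrepr.eq hf)]

theorem Tournament.exists_invSeq_eq [Finite V] (T T' : Tournament V) :
    ∃ Xs : List (Set V), T.invSeq Xs = T' := by
  obtain ⟨m, hm⟩ := (boolSum T T').exists_isBooleanRepr_fin
  have hm : m ∈ {m | ∃ f : V → Fin m → ZMod 2, (boolSum T T').IsBooleanRepr f} := hm
  rw [← setOf_invSeq_eq_setOf_isBooleanRepr] at hm
  obtain ⟨Xs, -, hXs⟩ := hm
  exact ⟨Xs, Tournament.ext hXs⟩

end BoolSum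

/-- the inversion index of a tournament on a finite vertex set `V` is
the minimum, over acyclic tournaments `T'` on `V`, of the least `m` such that
`T' = Inv(T, (X_i)_{i<m})`; equivalently, the minimum over acyclic `T'` of the
Boolean dimension of `T +̇ T'`. -/
theorem index_eq_min_dist_to_acyclic {V : Type*} [Fintype V] (T : Tournament V) :
    T.index =
      sInf {k | ∃ T' : Tournament V, T'.IsAcyclic ∧
        k = sInf {m | ∃ Xs : List (Set V), Xs.length = m ∧
              ∀ x y, (T.invSeq Xs).rel x y ↔ T'.rel x y}} ∧
    T.index =
      sInf {k | ∃ T' : Tournament V, T'.IsAcyclic ∧ k = booleanDim (boolSum T T')} := by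
  have hreach (T' : Tournament V) := setOf_invSeq_eq_setOf_isBooleanRepr T T'
  have hmin : T.index = sInf {k | ∃ T' : Tournament V, T'.IsAcyclic ∧
      k = sInf {m | ∃ Xs : List (Set V), Xs.length = m ∧
        ∀ x y, (T.invSeq Xs).rel x y ↔ T'.rel x y}} :=
    T.index_eq_sInf_setOf_exists_isAcyclic.trans <| Nat.sInf_setOf_exists_mem _ _ fun T' _ =>
      let ⟨Xs, hXs⟩ := T.exists_invSeq_eq T'
      ⟨_, Xs, rfl, fun x y => by rw [hXs]⟩
  refine ⟨hmin, ?_⟩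
  simp only [hreach] at hmin
  exact hmin
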